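/- arXiv:2311.14364 — 4 statements merged into one kernel-verified Lean document; each statement's English description precedes it below -/
import Mathlib

section
/- Let (X, dim, ∂) be a Lefschetz complex, let s be a facet of t in X, and let (X', dim', ∂') be the quotient after canceling the pair (s,t). Then (X', dim', ∂') is again a Lefschetz complex: ∂'(x,y) ≠ 0 only if dim' y = dim' x + 1, and Σ_{y∈X'} ∂'(x,y)·∂'(y,z) = 0 (mod 2) for all x, z ∈ X'. -/
attribute [local instance] Classical.propDecidable

/-- A Lefschetz complex over an ambient finite type `C` of potential cells:
a finite set `cells` of cells, a dimension function, and a mod-2 incidence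
function `bd` supported on `cells`, with `bd x y ≠ 0` only if
`dim y = dim x + 1`, and `∂∘∂ = 0` mod 2. -/
structure LC (C : Type) [Fintype C] [DecidableEq C] : Type where
  cells : Finset C
  dim : C → ℤ
  bd : C → C → ZMod 2
  bd_mem : ∀ x y, bd x y ≠ 0 → x ∈ cells ∧ y ∈ cells
  bd_dim : ∀ x y, bd x y ≠ 0 → dim y = dim x + 1
  bd_sq : ∀ x z, ∑ y, bd x y * bd y z = 0

variable {C : Type} [Fintype C] [DecidableEq C]

/-- A filter on a Lefschetz complex: injective on the cells, and increasing
along the facet relation. -/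
def IsFilter (L : LC C) (f : C → ℝ) : Prop :=
  (∀ x ∈ L.cells, ∀ y ∈ L.cells, f x = f y → x = y) ∧
  ∀ x y, L.bd x y ≠ 0 → f x < f y

lemma LC.bd_self (L : LC C) (a : C) : L.bd a a = 0 := by
  by_contra h
  have := L.bd_dim a a h
  omega

/-- The boundary map of the quotient after canceling `(s,t)`:
`∂'(x,y) = ∂(x,y) + ∂(s,y)·∂(x,t)` on the remaining cells, `0` elsewhere. -/
def cancelBd (L : LC C) (s t : C) : C → C → ZMod 2 := fun x y =>
  if x ∈ L.cells \ {s, t} ∧ y ∈ L.cells \ {s, t} then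
    L.bd x y + L.bd s y * L.bd x t
  else 0

private lemma zmod2_add_self : ∀ a : ZMod 2, a + a = 0 := by decide

/-- The quotient Lefschetz complex after canceling the facet-cofacet pair `(s,t)`. -/
noncomputable def cancel (L : LC C) (s t : C) : LC C :=
  if hst : L.bd s t = 1 then
    { cells := L.cells \ {s, t}
      dim := L.dim
      bd := cancelBd L s t
      bd_mem := by
        intro x y h
        unfold cancelBd at h
        split_ifs at h with hc
        · exact hc
        · exact absurd rfl h
      bd_dim := by
        intro x y h
        unfold cancelBd at h
        split_ifs at h with hc
        · by_cases hxy : L.bd x y = 0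
          · rw [hxy, zero_add] at h
            have h1 : L.bd s y ≠ 0 := fun hz => by simp [hz] at h
            have h2 : L.bd x t ≠ 0 := fun hz => by simp [hz] at h
            have d1 := L.bd_dim s y h1
            have d2 := L.bd_dim x t h2
            have d3 := L.bd_dim s t (by simp [hst])
            omega
          · exact L.bd_dim x y hxy
        · exact absurd rfl h
      bd_sq := by
        intro x z
        by_cases hx : x ∈ L.cells \ {s, t}
        swap
        · refine Finset.sum_eq_zero fun y _ => ?_
          unfold cancelBd
          rw [if_neg (fun hc => hx hc.1), zero_mul]
        by_cases hz : z ∈ L.cells \ {s, t}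
        swap
        · refine Finset.sum_eq_zero fun y _ => ?_
          have h0 : cancelBd L s t y z = 0 := by
            unfold cancelBd; rw [if_neg (fun hc => hz hc.2)]
          rw [h0, mul_zero]
        have key : ∀ y, cancelBd L s t x y * cancelBd L s t y z =
            (L.bd x y + L.bd s y * L.bd x t) * (L.bd y z + L.bd s z * L.bd y t) := by
          intro y
          by_cases hy : y ∈ L.cells \ {s, t}
          · unfold cancelBd
            rw [if_pos ⟨hx, hy⟩, if_pos ⟨hy, hz⟩]
          · have lhs0 : cancelBd L s t x y = 0 := by
              unfold cancelBd; rw [if_neg (fun hc => hy hc.2)]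
            rw [lhs0, zero_mul]
            by_cases hyc : y ∈ L.cells
            · have hyst : y = s ∨ y = t := by
                simp only [Finset.mem_sdiff, Finset.mem_insert, Finset.mem_singleton] at hy
                tauto
              rcases hyst with rfl | rfl
              · simp [L.bd_self, hst, zmod2_add_self]
              · simp [L.bd_self, hst, zmod2_add_self]
            · have b1 : L.bd x y = 0 := by
                by_contra hb; exact hyc (L.bd_mem x y hb).2
              have b2 : L.bd s y = 0 := by
                by_contra hb; exact hyc (L.bd_mem s y hb).2
              have b3 : L.bd y z = 0 := by
                by_contra hb; exact hyc (L.bd_mem y z hb).1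
              have b4 : L.bd y t = 0 := by
                by_contra hb; exact hyc (L.bd_mem y t hb).1
              rw [b1, b2, b3, b4]
              ring
        rw [Finset.sum_congr rfl fun y _ => key y]
        have expand : ∀ y : C,
            (L.bd x y + L.bd s y * L.bd x t) * (L.bd y z + L.bd s z * L.bd y t) =
            L.bd x y * L.bd y z + L.bd s z * (L.bd x y * L.bd y t)
              + L.bd x t * (L.bd s y * L.bd y z)
              + L.bd x t * L.bd s z * (L.bd s y * L.bd y t) := by
          intro y; ring
        rw [Finset.sum_congr rfl fun y _ => expand y]
        simp only [Finset.sum_add_distrib, ← Finset.mul_sum, L.bd_sq, mul_zero,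
          add_zero, zero_add] }
  else L

/-- The boundary operator on mod-2 chains. -/
noncomputable def bdOp (L : LC C) : (C → ZMod 2) →ₗ[ZMod 2] (C → ZMod 2) where
  toFun c := fun x => ∑ y, L.bd x y * c y
  map_add' a b := by
    funext x
    simp [mul_add, Finset.sum_add_distrib]
  map_smul' m a := by
    funext x
    simp only [Pi.smul_apply, smul_eq_mul, RingHom.id_apply]
    rw [Finset.mul_sum]
    exact Finset.sum_congr rfl fun y _ => by ring

/-- The `p`-chains of a Lefschetz complex: mod-2 chains supported on cells of
dimension `p`. -/
def chains (L : LC C) (p : ℤ) : Submodule (ZMod 2) (C → ZMod 2) where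
  carrier := {c | ∀ x, c x ≠ 0 → x ∈ L.cells ∧ L.dim x = p}
  zero_mem' := by intro x hx; simp at hx
  add_mem' := by
    intro a b ha hb x hx
    by_cases h1 : a x = 0
    · refine hb x fun h2 => hx ?_
      show a x + b x = 0
      rw [h1, h2, add_zero]
    · exact ha x h1
  smul_mem' := by
    intro m c hc x hx
    refine hc x fun h0 => hx ?_
    show m * c x = 0
    rw [h0, mul_zero]

/-- The `p`-cycles. -/
noncomputable def cycles (L : LC C) (p : ℤ) : Submodule (ZMod 2) (C → ZMod 2) :=
  chains L p ⊓ LinearMap.ker (bdOp L)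

/-- The `p`-boundaries. -/
noncomputable def boundaries (L : LC C) (p : ℤ) : Submodule (ZMod 2) (C → ZMod 2) :=
  Submodule.map (bdOp L) (chains L (p + 1))

/-- The mod-2 homology of a Lefschetz complex in dimension `p`. -/
noncomputable def homology (L : LC C) (p : ℤ) : Type :=
  cycles L p ⧸ (Submodule.comap (cycles L p).subtype (boundaries L p))

noncomputable instance (L : LC C) (p : ℤ) : AddCommGroup (homology L p) :=
  inferInstanceAs (AddCommGroup (cycles L p ⧸
    Submodule.comap (cycles L p).subtype (boundaries L p)))

noncomputable instance (L : LC C) (p : ℤ) : Module (ZMod 2) (homology L p) :=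
  inferInstanceAs (Module (ZMod 2) (cycles L p ⧸
    Submodule.comap (cycles L p).subtype (boundaries L p)))

/-- The boundary of the cell `y`, as a chain. -/
def col (L : LC C) (y : C) : C → ZMod 2 := fun x => L.bd x y

/-- The chain `v` is the boundary of a chain supported on cells with filter
value `< b`. -/
def IsBdryBelow (L : LC C) (f : C → ℝ) (b : ℝ) (v : C → ZMod 2) : Prop :=
  ∃ c : C → ZMod 2, (∀ z, c z ≠ 0 → z ∈ L.cells ∧ f z < b) ∧ bdOp L c = v

/-- The cell `y` gives death: `[∂y] ≠ 0` in the homology of the sublevel set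
strictly below `f y`. -/
def givesDeath (L : LC C) (f : C → ℝ) (y : C) : Prop :=
  y ∈ L.cells ∧ ¬ IsBdryBelow L f (f y) (col L y)

/-- The cell `y` gives birth: `[∂y] = 0` in the homology of the sublevel set
strictly below `f y`. -/
def givesBirth (L : LC C) (f : C → ℝ) (y : C) : Prop :=
  y ∈ L.cells ∧ IsBdryBelow L f (f y) (col L y)

/-- The unique chain supported on death-giving cells below `y` whose boundary
is `∂y` (for birth-giving `y`); junk value otherwise. -/
noncomputable def canChain (L : LC C) (f : C → ℝ) (y : C) : C → ZMod 2 :=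
  if h : ∃ c : C → ZMod 2,
      (∀ z, c z ≠ 0 → f z < f y ∧ givesDeath L f z) ∧ bdOp L c = col L y
  then h.choose else 0

/-- The canonical cycle `d_y = y + c_y` of a birth-giving cell `y`. -/
noncomputable def canCycle (L : LC C) (f : C → ℝ) (y : C) : C → ZMod 2 :=
  Pi.single y 1 + canChain L f y

/-- `v` and `w` are homologous in the sublevel complex strictly below `b`. -/
def HomBelow (L : LC C) (f : C → ℝ) (b : ℝ) (v w : C → ZMod 2) : Prop :=
  ∃ c : C → ZMod 2, (∀ z, c z ≠ 0 → z ∈ L.cells ∧ f z < b) ∧ bdOp L c = v + w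

/-- Sorting a finset of cells by increasing filter value (fueled recursion). -/
noncomputable def sortAux (f : C → ℝ) : ℕ → Finset C → List C
  | 0, _ => []
  | n + 1, S =>
    if h : S.Nonempty then
      let m := (Finset.exists_min_image S f h).choose
      m :: sortAux f n (S.erase m)
    else []

/-- The cells of `L` listed in increasing order of filter value. -/
noncomputable def sortedCells (L : LC C) (f : C → ℝ) : List C :=
  sortAux f L.cells.card L.cells

/-- An element of `S` maximizing `f`, with default value. -/
noncomputable def maxCellD (f : C → ℝ) (S : Finset C) (dflt : C) : C :=
  if h : S.Nonempty then (Finset.exists_max_image S f h).choose else dflt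

/-- One step of the persistence pairing algorithm: the state is the pair
(unpaired birth-giving cells, birth-death pairs found so far), and `y` is the
next cell in the filter order.  If `y` gives birth it is added to the unpaired
set; if `y` gives death, the unique subset `A` of the unpaired cells whose
canonical cycles sum to a cycle homologous to `∂y` below `y` is found, and `y`
is paired with the cell of `A` of maximal filter value. -/
noncomputable def pairStep (L : LC C) (f : C → ℝ) (st : Finset C × Finset (C × C))
    (y : C) : Finset C × Finset (C × C) :=
  if givesBirth L f y then (insert y st.1, st.2)
  else
    let A : Finset C :=
      if h : ∃! A : Finset C, A ⊆ st.1 ∧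
          HomBelow L f (f y) (∑ x ∈ A, canCycle L f x) (col L y)
      then h.exists.choose else ∅
    let s := maxCellD f A y
    (st.1.erase s, insert (s, y) st.2)

/-- The state of the persistence pairing after processing all cells. -/
noncomputable def pairState (L : LC C) (f : C → ℝ) : Finset C × Finset (C × C) :=
  (sortedCells L f).foldl (pairStep L f) (∅, ∅)

/-- The birth-death pairs `BD(f)` of the filter `f`. -/
noncomputable def BD (L : LC C) (f : C → ℝ) : Finset (C × C) :=
  (pairState L f).2

/-- The state of the persistence pairing after processing the cells with
filter value `< b`. -/
noncomputable def stateBelow (L : LC C) (f : C → ℝ) (b : ℝ) :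
    Finset C × Finset (C × C) :=
  ((sortedCells L f).filter (fun x => decide (f x < b))).foldl (pairStep L f) (∅, ∅)

/-- The birth-giving cells with value `< b` that are unpaired by the
persistence pairing restricted to the sublevel set below `b`. -/
noncomputable def unpairedBelow (L : LC C) (f : C → ℝ) (b : ℝ) : Finset C :=
  (stateBelow L f b).1

/-- `(s,t)` is a shallow pair: `s` is the facet of `t` with maximal filter
value and `t` is the cofacet of `s` with minimal filter value. -/
def IsShallow (L : LC C) (f : C → ℝ) (s t : C) : Prop :=
  L.bd s t = 1 ∧ (∀ x, L.bd x t ≠ 0 → f x ≤ f s) ∧ (∀ y, L.bd s y ≠ 0 → f t ≤ f y)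

/-- Cancel a list of pairs in sequence. -/
noncomputable def cancelList : LC C → List (C × C) → LC C
  | L, [] => L
  | L, p :: ps => cancelList (cancel L p.1 p.2) ps

/-- The quotient after canceling the first `k` pairs of the sequence `Φ`. -/
noncomputable def quotAt (L : LC C) {n : ℕ} (Φ : Fin n → C × C) (k : ℕ) : LC C :=
  cancelList L ((List.ofFn Φ).take k)

/-- `Φ` is a shallow order: an enumeration of the birth-death pairs of `f`
such that each pair is shallow for the quotient obtained by canceling all
preceding pairs. -/
def IsShallowOrder (L : LC C) (f : C → ℝ) {n : ℕ} (Φ : Fin n → C × C) : Prop :=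
  Function.Injective Φ ∧ (∀ i, Φ i ∈ BD L f) ∧
  ∀ i : Fin n, IsShallow (quotAt L Φ i) f (Φ i).1 (Φ i).2

/-- The depth poset: the intersection of the strict total orders induced on
`BD(f)` by all shallow orders. -/
def DepthRel (L : LC C) (f : C → ℝ) (φ ψ : C × C) : Prop :=
  φ ∈ BD L f ∧ ψ ∈ BD L f ∧
  ∀ Φ : Fin (BD L f).card → C × C, IsShallowOrder L f Φ →
    ∀ i j : Fin (BD L f).card, Φ i = φ → Φ j = ψ → i < j

/-- The rank of the lower-left minor of the ordered boundary matrix with rows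
the cells of filter value `≥ a` and columns the cells of filter value `≤ b`. -/
noncomputable def llRank (L : LC C) (f : C → ℝ) (a b : ℝ) : ℕ :=
  Matrix.rank (Matrix.of fun (x : {x : C // x ∈ L.cells ∧ a ≤ f x})
    (y : {y : C // y ∈ L.cells ∧ f y ≤ b}) => L.bd x.1 y.1)

/-- `Φ` and `Ψ` differ by transposing two adjacent positions. -/
def AdjSwap {n : ℕ} (Φ Ψ : Fin n → C × C) : Prop :=
  ∃ (k : Fin n) (hk : (k : ℕ) + 1 < n),
    Ψ k = Φ ⟨k + 1, hk⟩ ∧ Ψ ⟨k + 1, hk⟩ = Φ k ∧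
    ∀ i : Fin n, i ≠ k → i ≠ ⟨k + 1, hk⟩ → Ψ i = Φ i
/-- The quotient after canceling a facet-cofacet pair `(s,t)`
is again a Lefschetz complex: the updated incidence function
`∂'(x,y) = ∂(x,y) + ∂(s,y)·∂(x,t)` on `X' = X \ {s,t}` is nonzero only if
`dim y = dim x + 1`, and `Σ_{y∈X'} ∂'(x,y)·∂'(y,z) = 0` (mod 2). -/
theorem quotient_is_lefschetz (L : LC C) (s t : C) (hst : L.bd s t = 1) :
    (∀ x ∈ L.cells \ {s, t}, ∀ y ∈ L.cells \ {s, t},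
      L.bd x y + L.bd s y * L.bd x t ≠ 0 → L.dim y = L.dim x + 1) ∧
    (∀ x ∈ L.cells \ {s, t}, ∀ z ∈ L.cells \ {s, t},
      ∑ y ∈ L.cells \ {s, t},
        (L.bd x y + L.bd s y * L.bd x t) * (L.bd y z + L.bd s z * L.bd y t) = 0) := by
  constructor
  · intro x hx y hy h
    by_cases hxy : L.bd x y = 0
    · rw [hxy, zero_add] at h
      have h1 : L.bd s y ≠ 0 := fun hz => by simp [hz] at h
      have h2 : L.bd x t ≠ 0 := fun hz => by simp [hz] at h
      have d1 := L.bd_dim s y h1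
      have d2 := L.bd_dim x t h2
      have d3 := L.bd_dim s t (by simp [hst])
      omega
    · exact L.bd_dim x y hxy
  · intro x hx z hz
    have hext : ∑ y ∈ L.cells \ {s, t},
        (L.bd x y + L.bd s y * L.bd x t) * (L.bd y z + L.bd s z * L.bd y t) =
        ∑ y : C, (L.bd x y + L.bd s y * L.bd x t) * (L.bd y z + L.bd s z * L.bd y t) := by
      refine Finset.sum_subset (Finset.subset_univ _) ?_
      intro y _ hy
      by_cases hyc : y ∈ L.cells
      · have hyst : y = s ∨ y = t := by
          simp only [Finset.mem_sdiff, Finset.mem_insert, Finset.mem_singleton] at hy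
          tauto
        rcases hyst with rfl | rfl
        · simp [L.bd_self, hst, zmod2_add_self]
        · simp [L.bd_self, hst, zmod2_add_self]
      · have b1 : L.bd x y = 0 := by
          by_contra hb; exact hyc (L.bd_mem x y hb).2
        have b2 : L.bd s y = 0 := by
          by_contra hb; exact hyc (L.bd_mem s y hb).2
        have b3 : L.bd y z = 0 := by
          by_contra hb; exact hyc (L.bd_mem y z hb).1
        have b4 : L.bd y t = 0 := by
          by_contra hb; exact hyc (L.bd_mem y t hb).1
        rw [b1, b2, b3, b4]; ring
    rw [hext]
    have expand : ∀ y : C,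
        (L.bd x y + L.bd s y * L.bd x t) * (L.bd y z + L.bd s z * L.bd y t) =
        L.bd x y * L.bd y z + L.bd s z * (L.bd x y * L.bd y t)
          + L.bd x t * (L.bd s y * L.bd y z)
          + L.bd x t * L.bd s z * (L.bd s y * L.bd y t) := by
      intro y; ring
    rw [Finset.sum_congr rfl fun y _ => expand y]
    simp only [Finset.sum_add_distrib, ← Finset.mul_sum, L.bd_sq, mul_zero,
      add_zero, zero_add]
end

section
/- A Lefschetz complex and its quotient after canceling a facet-cofacet pair have isomorphic homology groups in every dimension (with ℤ/2 coefficients). -/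
attribute [local instance] Classical.propDecidable

variable {C : Type} [Fintype C] [DecidableEq C]

section CancelHomologyAux

private lemma bdOp_apply (L : LC C) (c : C → ZMod 2) (x : C) :
    bdOp L c x = ∑ y, L.bd x y * c y := rfl

private lemma mem_chains_iff (L : LC C) (p : ℤ) (c : C → ZMod 2) :
    c ∈ chains L p ↔ ∀ x, c x ≠ 0 → x ∈ L.cells ∧ L.dim x = p := Iff.rfl

private lemma mem_cycles_iff (L : LC C) (p : ℤ) (c : C → ZMod 2) :
    c ∈ cycles L p ↔ c ∈ chains L p ∧ bdOp L c = 0 := by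
  simp [cycles, Submodule.mem_inf, LinearMap.mem_ker]

private lemma cancel_cells (L : LC C) (s t : C) (hst : L.bd s t = 1) :
    (cancel L s t).cells = L.cells \ {s, t} := by
  rw [cancel, dif_pos hst]

private lemma cancel_dim (L : LC C) (s t : C) (hst : L.bd s t = 1) :
    (cancel L s t).dim = L.dim := by
  rw [cancel, dif_pos hst]

private lemma cancel_bd (L : LC C) (s t : C) (hst : L.bd s t = 1) :
    (cancel L s t).bd = cancelBd L s t := by
  rw [cancel, dif_pos hst]

private lemma bd_ne_zero (L : LC C) {s t : C} (hst : L.bd s t = 1) : L.bd s t ≠ 0 := by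
  rw [hst]; exact one_ne_zero

private lemma s_ne_t (L : LC C) {s t : C} (hst : L.bd s t = 1) : s ≠ t := by
  intro h
  have hd := L.bd_dim s t (bd_ne_zero L hst)
  rw [h] at hd
  omega

private lemma bd_zero_left (L : LC C) {x : C} (hx : x ∉ L.cells) (y : C) : L.bd x y = 0 := by
  by_contra h; exact hx (L.bd_mem x y h).1

private lemma bd_zero_right (L : LC C) {y : C} (hy : y ∉ L.cells) (x : C) : L.bd x y = 0 := by
  by_contra h; exact hy (L.bd_mem x y h).2

private noncomputable def piMap (L : LC C) (s t : C) :
    (C → ZMod 2) →ₗ[ZMod 2] (C → ZMod 2) where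
  toFun c := fun x => if x = s ∨ x = t then 0 else c x + c s * L.bd x t
  map_add' a b := by
    funext x
    by_cases h : x = s ∨ x = t
    · simp [h]
    · simp only [h, if_false, Pi.add_apply]; ring
  map_smul' m a := by
    funext x
    by_cases h : x = s ∨ x = t
    · simp [h]
    · simp only [h, if_false, Pi.smul_apply, smul_eq_mul, RingHom.id_apply]; ring

private noncomputable def psiMap (L : LC C) (s t : C) :
    (C → ZMod 2) →ₗ[ZMod 2] (C → ZMod 2) where
  toFun c := fun x => if x = t then ∑ y, L.bd s y * c y else c x
  map_add' a b := by
    funext x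
    by_cases h : x = t
    · simp [h, mul_add, Finset.sum_add_distrib]
    · simp [h]
  map_smul' m a := by
    funext x
    by_cases h : x = t
    · simp only [h, if_true, Pi.smul_apply, smul_eq_mul, RingHom.id_apply, Finset.mul_sum]
      exact Finset.sum_congr rfl fun y _ => by ring
    · simp [h]

private lemma piMap_apply (L : LC C) (s t : C) (c : C → ZMod 2) (x : C) :
    piMap L s t c x = if x = s ∨ x = t then 0 else c x + c s * L.bd x t := rfl

private lemma psiMap_apply (L : LC C) (s t : C) (c : C → ZMod 2) (x : C) :
    psiMap L s t c x = if x = t then ∑ y, L.bd s y * c y else c x := rfl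

private lemma not_mem_sdiff_self_left (L : LC C) (s t : C) : s ∉ L.cells \ ({s, t} : Finset C) := by
  simp

private lemma not_mem_sdiff_self_right (L : LC C) (s t : C) : t ∉ L.cells \ ({s, t} : Finset C) := by
  simp

private lemma cancelBd_zero_left (L : LC C) {s t x : C} (hx : x ∉ L.cells \ ({s, t} : Finset C))
    (y : C) : cancelBd L s t x y = 0 := by
  unfold cancelBd
  rw [if_neg (fun hc => hx hc.1)]

private lemma pi_chain (L : LC C) {s t : C} (hst : L.bd s t = 1) {p : ℤ} {c : C → ZMod 2}
    (hc : c ∈ chains L p) : piMap L s t c ∈ chains (cancel L s t) p := by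
  rw [mem_chains_iff, cancel_cells L s t hst, cancel_dim L s t hst]
  intro x hx
  rw [piMap_apply] at hx
  by_cases h : x = s ∨ x = t
  · rw [if_pos h] at hx; exact absurd rfl hx
  rw [if_neg h] at hx
  push_neg at h
  have hmem : x ∈ L.cells ∧ L.dim x = p := by
    by_cases hcx : c x = 0
    · rw [hcx, zero_add] at hx
      have h1 : c s ≠ 0 := fun hz => hx (by rw [hz, zero_mul])
      have h2 : L.bd x t ≠ 0 := fun hz => hx (by rw [hz, mul_zero])
      have d1 := L.bd_dim x t h2
      have d2 := L.bd_dim s t (bd_ne_zero L hst)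
      have hs := hc s h1
      exact ⟨(L.bd_mem x t h2).1, by omega⟩
    · exact hc x hcx
  refine ⟨Finset.mem_sdiff.mpr ⟨hmem.1, ?_⟩, hmem.2⟩
  simp [h.1, h.2]

private lemma chains_cancel_zero (L : LC C) {s t : C} (hst : L.bd s t = 1) {p : ℤ}
    {c : C → ZMod 2} (hc : c ∈ chains (cancel L s t) p) : c s = 0 ∧ c t = 0 := by
  rw [mem_chains_iff, cancel_cells L s t hst] at hc
  constructor
  · by_contra h
    exact not_mem_sdiff_self_left L s t (hc s h).1
  · by_contra h
    exact not_mem_sdiff_self_right L s t (hc t h).1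

private lemma psi_chain (L : LC C) {s t : C} (hst : L.bd s t = 1) {p : ℤ} {c : C → ZMod 2}
    (hc : c ∈ chains (cancel L s t) p) : psiMap L s t c ∈ chains L p := by
  have hc' := hc
  rw [mem_chains_iff, cancel_cells L s t hst, cancel_dim L s t hst] at hc'
  rw [mem_chains_iff]
  intro x hx
  rw [psiMap_apply] at hx
  by_cases h : x = t
  · rw [if_pos h] at hx
    obtain ⟨y, _, hy⟩ := Finset.exists_ne_zero_of_sum_ne_zero hx
    have h1 : L.bd s y ≠ 0 := fun hz => hy (by rw [hz, zero_mul])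
    have h2 : c y ≠ 0 := fun hz => hy (by rw [hz, mul_zero])
    have d1 := L.bd_dim s y h1
    have d2 := L.bd_dim s t (bd_ne_zero L hst)
    have hy' := hc' y h2
    subst h
    exact ⟨(L.bd_mem s x (bd_ne_zero L hst)).2, by omega⟩
  · rw [if_neg h] at hx
    exact ⟨(Finset.mem_sdiff.mp (hc' x hx).1).1, (hc' x hx).2⟩

end CancelHomologyAux

section CancelHomologyAux2

/-- Expansion of the summand in `π ∘ ∂ = ∂' ∘ π`. -/
private lemma pi_entry (L : LC C) {s t : C} (hst : L.bd s t = 1) (c : C → ZMod 2)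
    {x : C} (hxs : x ≠ s) (hxt : x ≠ t) (y : C) :
    cancelBd L s t x y * (if y = s ∨ y = t then 0 else c y + c s * L.bd y t) =
      (L.bd x y + L.bd s y * L.bd x t) * (c y + c s * L.bd y t) := by
  by_cases hcond : x ∈ L.cells \ ({s, t} : Finset C) ∧ y ∈ L.cells \ ({s, t} : Finset C)
  · have hys : y ≠ s := by
      intro h; exact not_mem_sdiff_self_left L s t (h ▸ hcond.2)
    have hyt : y ≠ t := by
      intro h; exact not_mem_sdiff_self_right L s t (h ▸ hcond.2)
    unfold cancelBd
    rw [if_pos hcond, if_neg (by tauto)]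
  · unfold cancelBd
    rw [if_neg hcond, zero_mul]
    by_cases hys : y = s
    · subst hys
      rw [L.bd_self, hst, mul_one, zmod2_add_self, mul_zero]
    by_cases hyt : y = t
    · subst hyt
      rw [hst, one_mul, zmod2_add_self, zero_mul]
    -- now y ∉ {s,t}, so x ∉ cells \ {s,t} i.e. x ∉ cells, or y ∉ cells
    by_cases hyc : y ∈ L.cells
    · have hxc : x ∉ L.cells := by
        intro hx
        exact hcond ⟨Finset.mem_sdiff.mpr ⟨hx, by simp [hxs, hxt]⟩,
          Finset.mem_sdiff.mpr ⟨hyc, by simp [hys, hyt]⟩⟩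
      rw [bd_zero_left L hxc y, bd_zero_left L hxc t, mul_zero, add_zero, zero_mul]
    · rw [bd_zero_right L hyc x, bd_zero_right L hyc s, zero_mul, add_zero, zero_mul]

private lemma pi_comm (L : LC C) {s t : C} (hst : L.bd s t = 1) (c : C → ZMod 2) :
    piMap L s t (bdOp L c) = bdOp (cancel L s t) (piMap L s t c) := by
  funext x
  simp only [piMap_apply, bdOp_apply, cancel_bd L s t hst]
  by_cases hx : x = s ∨ x = t
  · rw [if_pos hx]
    refine (Finset.sum_eq_zero fun y _ => ?_).symm
    have hx' : x ∉ L.cells \ ({s, t} : Finset C) := by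
      rcases hx with h | h
      · exact h ▸ not_mem_sdiff_self_left L s t
      · exact h ▸ not_mem_sdiff_self_right L s t
    rw [cancelBd_zero_left L hx' y, zero_mul]
  · push_neg at hx
    rw [if_neg (by tauto)]
    rw [Finset.sum_congr rfl fun y _ => pi_entry L hst c hx.1 hx.2 y]
    have expand : ∀ y : C,
        (L.bd x y + L.bd s y * L.bd x t) * (c y + c s * L.bd y t) =
          L.bd x y * c y + c s * (L.bd x y * L.bd y t)
            + L.bd x t * (L.bd s y * c y) + (c s * L.bd x t) * (L.bd s y * L.bd y t) := by
      intro y; ring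
    rw [Finset.sum_congr rfl fun y _ => expand y]
    simp only [Finset.sum_add_distrib, ← Finset.mul_sum, L.bd_sq, mul_zero, add_zero]
    ring

/-- Expansion of the summand of `∂'` acting on a chain vanishing at `s` and `t`. -/
private lemma cancelBd_entry (L : LC C) {s t : C} (hst : L.bd s t = 1) {c : C → ZMod 2}
    (hcs : c s = 0) (hct : c t = 0) {x : C} (hxt : x ≠ t) (y : C) :
    cancelBd L s t x y * c y = L.bd x y * c y + L.bd x t * (L.bd s y * c y) := by
  by_cases hcond : x ∈ L.cells \ ({s, t} : Finset C) ∧ y ∈ L.cells \ ({s, t} : Finset C)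
  · unfold cancelBd; rw [if_pos hcond]; ring
  · unfold cancelBd
    rw [if_neg hcond, zero_mul]
    by_cases hys : y = s
    · rw [hys, hcs, mul_zero, mul_zero, mul_zero, add_zero]
    by_cases hyt : y = t
    · rw [hyt, hct, mul_zero, mul_zero, mul_zero, add_zero]
    by_cases hyc : y ∈ L.cells
    · -- then x ∉ cells \ {s,t}: x = s or x ∉ cells
      have hx' : x ∉ L.cells \ ({s, t} : Finset C) := by
        intro hx
        exact hcond ⟨hx, Finset.mem_sdiff.mpr ⟨hyc, by simp [hys, hyt]⟩⟩
      by_cases hxs : x = s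
      · subst hxs
        rw [hst, one_mul, ← add_mul, zmod2_add_self, zero_mul]
      · have hxc : x ∉ L.cells := by
          intro hx; exact hx' (Finset.mem_sdiff.mpr ⟨hx, by simp [hxs, hxt]⟩)
        rw [bd_zero_left L hxc y, bd_zero_left L hxc t, zero_mul, zero_add, zero_mul]
    · rw [bd_zero_right L hyc x, bd_zero_right L hyc s]; ring

/-- `∂'` on chains vanishing at `s`,`t`, at coordinates other than `t`. -/
private lemma bdOp_cancel_apply (L : LC C) {s t : C} (hst : L.bd s t = 1) {c : C → ZMod 2}
    (hcs : c s = 0) (hct : c t = 0) {x : C} (hxt : x ≠ t) :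
    bdOp (cancel L s t) c x = (∑ y, L.bd x y * c y) + L.bd x t * ∑ y, L.bd s y * c y := by
  rw [bdOp_apply, cancel_bd L s t hst,
    Finset.sum_congr rfl fun y _ => cancelBd_entry L hst hcs hct hxt y,
    Finset.sum_add_distrib, ← Finset.mul_sum]

private lemma bdOp_cancel_t (L : LC C) {s t : C} (hst : L.bd s t = 1) (c : C → ZMod 2)
    {x : C} (hx : x ∉ L.cells \ ({s, t} : Finset C)) :
    bdOp (cancel L s t) c x = 0 := by
  rw [bdOp_apply, cancel_bd L s t hst]
  exact Finset.sum_eq_zero fun y _ => by rw [cancelBd_zero_left L hx y, zero_mul]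

private lemma psi_comm (L : LC C) {s t : C} (hst : L.bd s t = 1) {c : C → ZMod 2}
    (hcs : c s = 0) (hct : c t = 0) :
    psiMap L s t (bdOp (cancel L s t) c) = bdOp L (psiMap L s t c) := by
  have hstne := s_ne_t L hst
  have htt : L.bd t t = 0 := L.bd_self t
  -- RHS simplification: ∑ y, bd x y * ψc y = ∑ y, bd x y * c y + (if-correction)
  have hrhs : ∀ x : C, bdOp L (psiMap L s t c) x =
      (∑ y, L.bd x y * c y) + L.bd x t * ∑ y, L.bd s y * c y := by
    intro x
    rw [bdOp_apply]
    have kl : ∀ y : C, L.bd x y * psiMap L s t c y =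
        L.bd x y * c y + (if y = t then L.bd x t * ∑ z, L.bd s z * c z else 0) := by
      intro y
      rw [psiMap_apply]
      by_cases hy : y = t
      · subst hy
        rw [if_pos rfl, if_pos rfl, hct, mul_zero, zero_add]
      · rw [if_neg hy, if_neg hy, add_zero]
    rw [Finset.sum_congr rfl fun y _ => kl y, Finset.sum_add_distrib,
      Finset.sum_ite_eq' Finset.univ t (fun _ => L.bd x t * ∑ z, L.bd s z * c z)]
    simp
  funext x
  rw [psiMap_apply]
  by_cases hxt : x = t
  · subst x
    rw [if_pos rfl, hrhs t, htt, zero_mul, add_zero]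
    -- LHS: ∑ y, bd s y * (∂'c) y  =  ∑ y, bd t y * c y
    have kl : ∀ y : C, L.bd s y * bdOp (cancel L s t) c y =
        L.bd s y * ((∑ z, L.bd y z * c z) + L.bd y t * ∑ z, L.bd s z * c z)
          + (if y = t then (∑ z, L.bd t z * c z) + L.bd t t * ∑ z, L.bd s z * c z else 0) := by
      intro y
      by_cases hy : y = t
      · subst y
        rw [if_pos rfl, bdOp_cancel_t L hst c (not_mem_sdiff_self_right L s t), mul_zero,
          hst, one_mul, zmod2_add_self]
      · rw [if_neg hy, add_zero, bdOp_cancel_apply L hst hcs hct hy]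
    rw [Finset.sum_congr rfl fun y _ => kl y, Finset.sum_add_distrib,
      Finset.sum_ite_eq' Finset.univ t
        (fun _ => (∑ z, L.bd t z * c z) + L.bd t t * ∑ z, L.bd s z * c z)]
    have e1 : ∀ y : C, L.bd s y * ((∑ z, L.bd y z * c z) + L.bd y t * ∑ z, L.bd s z * c z)
        = (∑ z, L.bd s y * (L.bd y z * c z))
          + (L.bd s y * L.bd y t) * ∑ z, L.bd s z * c z := by
      intro y
      rw [mul_add, Finset.mul_sum, mul_assoc]
    rw [Finset.sum_congr rfl fun y _ => e1 y, Finset.sum_add_distrib,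
      ← Finset.sum_mul, L.bd_sq s t, zero_mul, add_zero, Finset.sum_comm]
    have e2 : ∀ z : C, (∑ y, L.bd s y * (L.bd y z * c z)) = 0 := by
      intro z
      have : ∀ y : C, L.bd s y * (L.bd y z * c z) = (L.bd s y * L.bd y z) * c z := by
        intro y; ring
      rw [Finset.sum_congr rfl fun y _ => this y, ← Finset.sum_mul, L.bd_sq s z, zero_mul]
    rw [Finset.sum_congr rfl fun z _ => e2 z, Finset.sum_const_zero, zero_add, htt,
      zero_mul, add_zero]
    simp
  · rw [if_neg hxt, hrhs x, bdOp_cancel_apply L hst hcs hct hxt]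

end CancelHomologyAux2

section CancelHomologyAux3

private lemma pi_psi (L : LC C) {s t : C} (hst : L.bd s t = 1) {c : C → ZMod 2}
    (hcs : c s = 0) (hct : c t = 0) : piMap L s t (psiMap L s t c) = c := by
  have hstne := s_ne_t L hst
  funext x
  rw [piMap_apply]
  by_cases hx : x = s ∨ x = t
  · rcases hx with rfl | rfl
    · rw [if_pos (Or.inl rfl), hcs]
    · rw [if_pos (Or.inr rfl), hct]
  · push_neg at hx
    rw [if_neg (by tauto), psiMap_apply, if_neg hx.2, psiMap_apply, if_neg hstne, hcs,
      zero_mul, add_zero]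

private lemma psi_pi (L : LC C) {s t : C} (hst : L.bd s t = 1) (c : C → ZMod 2) :
    psiMap L s t (piMap L s t c) =
      c + bdOp L (fun z => if z = t then c s else 0)
        + fun z => if z = t then bdOp L c s else 0 := by
  have hstne := s_ne_t L hst
  have hb : ∀ x : C, bdOp L (fun z => if z = t then c s else 0) x = L.bd x t * c s := by
    intro x
    rw [bdOp_apply]
    have e : ∀ y : C, L.bd x y * (if y = t then c s else 0) =
        if y = t then L.bd x t * c s else 0 := by
      intro y
      by_cases hy : y = t
      · subst y; rw [if_pos rfl, if_pos rfl]
      · rw [if_neg hy, if_neg hy, mul_zero]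
    rw [Finset.sum_congr rfl fun y _ => e y,
      Finset.sum_ite_eq' Finset.univ t (fun _ => L.bd x t * c s), if_pos (Finset.mem_univ t)]
  funext x
  simp only [Pi.add_apply]
  rw [psiMap_apply, hb x]
  by_cases hxt : x = t
  · subst x
    rw [if_pos rfl, if_pos rfl, L.bd_self, zero_mul, add_zero, bdOp_apply]
    have kl : ∀ y : C, L.bd s y * piMap L s t c y =
        L.bd s y * c y + c s * (L.bd s y * L.bd y t) + (if y = t then c t else 0) := by
      intro y
      rw [piMap_apply]
      by_cases hys : y = s
      · subst y
        rw [if_pos (Or.inl rfl), L.bd_self, if_neg hstne]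
        ring
      by_cases hyt : y = t
      · subst y
        rw [if_pos (Or.inr rfl), if_pos rfl, hst, L.bd_self]
        simp [zmod2_add_self]
      · rw [if_neg (by tauto), if_neg hyt]
        ring
    rw [Finset.sum_congr rfl fun y _ => kl y, Finset.sum_add_distrib, Finset.sum_add_distrib,
      ← Finset.mul_sum, L.bd_sq s t, mul_zero, add_zero,
      Finset.sum_ite_eq' Finset.univ t (fun _ => c t), if_pos (Finset.mem_univ t)]
    ring
  · rw [if_neg hxt, if_neg hxt, add_zero, piMap_apply]
    by_cases hxs : x = s
    · subst x
      rw [if_pos (Or.inl rfl), hst]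
      simp [zmod2_add_self]
    · rw [if_neg (by tauto)]
      ring

end CancelHomologyAux3

/-- **Proposition: preserved homology.** A Lefschetz complex and
its quotient after canceling a facet-cofacet pair have isomorphic homology
groups in every dimension (with ℤ/2 coefficients). -/
theorem cancel_preserves_homology (L : LC C) (s t : C) (hst : L.bd s t = 1) :
    ∀ p : ℤ, Nonempty (homology L p ≃ₗ[ZMod 2] homology (cancel L s t) p) := by
  intro p
  have hpi_cyc : ∀ c ∈ cycles L p, piMap L s t c ∈ cycles (cancel L s t) p := by
    intro c hc
    rw [mem_cycles_iff] at hc ⊢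
    refine ⟨pi_chain L hst hc.1, ?_⟩
    rw [← pi_comm L hst, hc.2, map_zero]
  have hpsi_cyc : ∀ c ∈ cycles (cancel L s t) p, psiMap L s t c ∈ cycles L p := by
    intro c hc
    rw [mem_cycles_iff] at hc ⊢
    obtain ⟨h0s, h0t⟩ := chains_cancel_zero L hst hc.1
    refine ⟨psi_chain L hst hc.1, ?_⟩
    rw [← psi_comm L hst h0s h0t, hc.2, map_zero]
  set B : Submodule (ZMod 2) (cycles L p) :=
    Submodule.comap (cycles L p).subtype (boundaries L p) with hB
  set B' : Submodule (ZMod 2) (cycles (cancel L s t) p) :=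
    Submodule.comap (cycles (cancel L s t) p).subtype (boundaries (cancel L s t) p) with hB'
  set F1 : cycles L p →ₗ[ZMod 2] cycles (cancel L s t) p :=
    (piMap L s t).restrict hpi_cyc with hF1
  set G1 : cycles (cancel L s t) p →ₗ[ZMod 2] cycles L p :=
    (psiMap L s t).restrict hpsi_cyc with hG1
  have hF2 : B ≤ Submodule.comap F1 B' := by
    intro c hc
    rw [hB, Submodule.mem_comap, Submodule.subtype_apply, boundaries, Submodule.mem_map] at hc
    obtain ⟨d, hd, hdc⟩ := hc
    rw [Submodule.mem_comap, hB', Submodule.mem_comap, Submodule.subtype_apply, boundaries,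
      Submodule.mem_map]
    refine ⟨piMap L s t d, pi_chain L hst hd, ?_⟩
    rw [← pi_comm L hst, hdc]
    rfl
  have hG2 : B' ≤ Submodule.comap G1 B := by
    intro c hc
    rw [hB', Submodule.mem_comap, Submodule.subtype_apply, boundaries, Submodule.mem_map] at hc
    obtain ⟨d, hd, hdc⟩ := hc
    rw [Submodule.mem_comap, hB, Submodule.mem_comap, Submodule.subtype_apply, boundaries,
      Submodule.mem_map]
    obtain ⟨h0s, h0t⟩ := chains_cancel_zero L hst hd
    refine ⟨psiMap L s t d, psi_chain L hst hd, ?_⟩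
    rw [← psi_comm L hst h0s h0t, hdc]
    rfl
  refine ⟨LinearEquiv.ofLinear (Submodule.mapQ B B' F1 hF2) (Submodule.mapQ B' B G1 hG2)
    (LinearMap.ext ?_) (LinearMap.ext ?_)⟩
  · intro z
    obtain ⟨c, rfl⟩ := Submodule.Quotient.mk_surjective B' z
    show Submodule.Quotient.mk (F1 (G1 c)) = Submodule.Quotient.mk c
    congr 1
    apply Subtype.ext
    have hch : (↑c : C → ZMod 2) ∈ chains (cancel L s t) p :=
      ((mem_cycles_iff _ _ _).mp c.2).1
    obtain ⟨h0s, h0t⟩ := chains_cancel_zero L hst hch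
    show piMap L s t (psiMap L s t ↑c) = ↑c
    exact pi_psi L hst h0s h0t
  · intro z
    obtain ⟨c, rfl⟩ := Submodule.Quotient.mk_surjective B z
    show Submodule.Quotient.mk (G1 (F1 c)) = Submodule.Quotient.mk c
    rw [Submodule.Quotient.eq]
    have hcyc := (mem_cycles_iff L p ↑c).mp c.2
    have hkey : ((G1 (F1 c) : cycles L p) : C → ZMod 2) =
        ↑c + bdOp L (fun z => if z = t then (↑c : C → ZMod 2) s else 0) := by
      show psiMap L s t (piMap L s t ↑c) = _
      rw [psi_pi L hst]
      have h0 : (fun z => if z = t then bdOp L (↑c : C → ZMod 2) s else 0) =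
          (0 : C → ZMod 2) := by
        funext z
        rw [hcyc.2]
        simp
      rw [h0, add_zero]
    rw [hB, Submodule.mem_comap, Submodule.subtype_apply]
    have hsub : ((G1 (F1 c) - c : cycles L p) : C → ZMod 2) =
        bdOp L (fun z => if z = t then (↑c : C → ZMod 2) s else 0) := by
      rw [Submodule.coe_sub, hkey]
      abel
    rw [hsub, boundaries, Submodule.mem_map]
    refine ⟨_, ?_, rfl⟩
    intro z hz
    by_cases hzt : z = t
    · subst z
      have hz' : (↑c : C → ZMod 2) s ≠ 0 := by simpa using hz
      have hs := hcyc.1 s hz'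
      have hd := L.bd_dim s t (bd_ne_zero L hst)
      exact ⟨(L.bd_mem s t (bd_ne_zero L hst)).2, by omega⟩
    · simp [hzt] at hz
end

section
/- Let f : X → ℝ be a filter on a Lefschetz complex with at least one death-giving cell, let t be the death-giving cell with minimal filter value, and let s be the facet of t with maximal filter value. Then (s,t) is a shallow pair of f. Consequently, if SH(f) = ∅ then BD(f) = ∅. -/
attribute [local instance] Classical.propDecidable

variable {C : Type} [Fintype C] [DecidableEq C]

/-! If a cofacet `y` of `s` had `f y < f t`, the cofacet `z` of `s` of least filter value would
give birth, so `∂z` would bound a chain below `f z`; comparing coefficients at `s`, that chain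
contains a cofacet of `s` below `f z`, contradicting minimality. Hence `z` gives death before
`t`, which is impossible. For the second part, if some cell gives death then the first one,
paired with its last facet, is shallow; otherwise every cell gives birth and the pairing
algorithm never records a pair. -/

lemma zmod_two_eq_one_of_ne_zero : ∀ a : ZMod 2, a ≠ 0 → a = 1 := by decide

lemma mem_cells_of_mem_sortedCells {L : LC C} {f : C → ℝ} {x : C}
    (hx : x ∈ sortedCells L f) : x ∈ L.cells := by
  suffices ∀ (n : ℕ) (S : Finset C), x ∈ sortAux f n S → x ∈ S from this _ _ hx
  intro n
  induction n with
  | zero => simp [sortAux]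
  | succ n ih =>
    intro S hx
    rw [sortAux] at hx
    split_ifs at hx with h
    · rcases List.mem_cons.mp hx with rfl | hx
      · exact (Finset.exists_min_image S f h).choose_spec.1
      · exact Finset.mem_of_mem_erase (ih _ hx)
    · simp at hx

lemma foldl_pairStep_snd_of_forall_givesBirth (L : LC C) (f : C → ℝ) :
    ∀ (l : List C) (st : Finset C × Finset (C × C)),
      (∀ y ∈ l, givesBirth L f y) → (l.foldl (pairStep L f) st).2 = st.2
  | [], _, _ => rfl
  | a :: l, st, h => by
    rw [List.foldl_cons,
      foldl_pairStep_snd_of_forall_givesBirth L f l _ fun y hy => h y (List.mem_cons_of_mem a hy)]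
    simp [pairStep, h a List.mem_cons_self]

lemma BD_eq_empty_of_forall_not_givesDeath {L : LC C} {f : C → ℝ}
    (h : ∀ y, ¬ givesDeath L f y) : BD L f = ∅ := by
  have hbirth : ∀ y ∈ sortedCells L f, givesBirth L f y := by
    intro y hy
    have hy' := mem_cells_of_mem_sortedCells hy
    exact ⟨hy', of_not_not fun hb => h y ⟨hy', hb⟩⟩
  exact foldl_pairStep_snd_of_forall_givesBirth L f _ _ hbirth

/-- The coefficient of `∂c` at `s` is a sum over the cofacets of `s` in the support of `c`. -/
lemma exists_cofacet_lt_of_isBdryBelow {L : LC C} {f : C → ℝ} {b : ℝ} {s y : C}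
    (h : IsBdryBelow L f b (col L y)) (hsy : L.bd s y ≠ 0) :
    ∃ z ∈ L.cells, L.bd s z ≠ 0 ∧ f z < b := by
  obtain ⟨c, hc, hcy⟩ := h
  have hsum : ∑ z, L.bd s z * c z ≠ 0 := by
    change bdOp L c s ≠ 0
    rwa [hcy]
  obtain ⟨z, -, hz⟩ := Finset.exists_ne_zero_of_sum_ne_zero hsum
  obtain ⟨hsz, hcz⟩ := mul_ne_zero_iff.mp hz
  exact ⟨z, (hc z hcz).1, hsz, (hc z hcz).2⟩

lemma exists_givesDeath_cofacet_le {L : LC C} {f : C → ℝ} {s y : C} (hsy : L.bd s y ≠ 0) :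
    ∃ z, L.bd s z ≠ 0 ∧ f z ≤ f y ∧ givesDeath L f z := by
  let S := L.cells.filter (fun z => L.bd s z ≠ 0)
  have hyS : y ∈ S := Finset.mem_filter.mpr ⟨(L.bd_mem s y hsy).2, hsy⟩
  obtain ⟨z, hzS, hzmin⟩ := Finset.exists_min_image S f ⟨y, hyS⟩
  obtain ⟨hz, hsz⟩ := Finset.mem_filter.mp hzS
  refine ⟨z, hsz, hzmin y hyS, hz, fun hbirth => ?_⟩
  obtain ⟨w, hw, hsw, hwz⟩ := exists_cofacet_lt_of_isBdryBelow hbirth hsz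
  exact (hzmin w (Finset.mem_filter.mpr ⟨hw, hsw⟩)).not_gt hwz

lemma isShallow_of_forall_givesDeath_le {L : LC C} {f : C → ℝ} {s t : C}
    (hmin : ∀ y, givesDeath L f y → f t ≤ f y) (hst : L.bd s t = 1)
    (hmax : ∀ x, L.bd x t ≠ 0 → f x ≤ f s) : IsShallow L f s t := by
  refine ⟨hst, hmax, fun y hsy => ?_⟩
  obtain ⟨z, -, hzy, hz⟩ := exists_givesDeath_cofacet_le hsy
  exact (hmin z hz).trans hzy

lemma exists_first_givesDeath {L : LC C} {f : C → ℝ} {y : C} (hy : givesDeath L f y) :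
    ∃ t, givesDeath L f t ∧ ∀ y, givesDeath L f y → f t ≤ f y := by
  let D := L.cells.filter (givesDeath L f)
  obtain ⟨t, htD, htmin⟩ :=
    Finset.exists_min_image D f ⟨y, Finset.mem_filter.mpr ⟨hy.1, hy⟩⟩
  exact ⟨t, (Finset.mem_filter.mp htD).2,
    fun z hz => htmin z (Finset.mem_filter.mpr ⟨hz.1, hz⟩)⟩

lemma givesDeath.exists_last_facet {L : LC C} {f : C → ℝ} {t : C} (ht : givesDeath L f t) :
    ∃ s, L.bd s t = 1 ∧ ∀ x, L.bd x t ≠ 0 → f x ≤ f s := by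
  have hfacet : ∃ x, L.bd x t ≠ 0 := by
    by_contra! h
    exact ht.2 ⟨0, by simp, by rw [map_zero]; exact (funext h).symm⟩
  obtain ⟨x, hx⟩ := hfacet
  let F := L.cells.filter (fun x => L.bd x t ≠ 0)
  obtain ⟨s, hsF, hsmax⟩ :=
    Finset.exists_max_image F f ⟨x, Finset.mem_filter.mpr ⟨(L.bd_mem x t hx).1, hx⟩⟩
  exact ⟨s, zmod_two_eq_one_of_ne_zero _ (Finset.mem_filter.mp hsF).2,
    fun x hx => hsmax x (Finset.mem_filter.mpr ⟨(L.bd_mem x t hx).1, hx⟩)⟩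

theorem first_death_last_facet_shallow_general (L : LC C) (f : C → ℝ) :
    (∀ t s : C, givesDeath L f t → (∀ y, givesDeath L f y → f t ≤ f y) →
      L.bd s t = 1 → (∀ x, L.bd x t ≠ 0 → f x ≤ f s) →
      IsShallow L f s t) ∧
    ((∀ s t : C, ¬ IsShallow L f s t) → BD L f = ∅) := by
  refine ⟨fun t s _ hmin hst hmax => isShallow_of_forall_givesDeath_le hmin hst hmax,
    fun hns => BD_eq_empty_of_forall_not_givesDeath fun y hy => ?_⟩
  obtain ⟨t, ht, hmin⟩ := exists_first_givesDeath hy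
  obtain ⟨s, hst, hmax⟩ := ht.exists_last_facet
  exact hns s t (isShallow_of_forall_givesDeath_le hmin hst hmax)

/-- If `t` is the death-giving cell with minimal filter value
and `s` is the facet of `t` with maximal filter value, then `(s,t)` is a
shallow pair.  Consequently, if `SH(f) = ∅` then `BD(f) = ∅`. -/
theorem first_death_last_facet_shallow (L : LC C) (f : C → ℝ)
    (hf : IsFilter L f) :
    (∀ t s : C, givesDeath L f t → (∀ y, givesDeath L f y → f t ≤ f y) →
      L.bd s t = 1 → (∀ x, L.bd x t ≠ 0 → f x ≤ f s) →
      IsShallow L f s t) ∧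
    ((∀ s t : C, ¬ IsShallow L f s t) → BD L f = ∅) :=
  first_death_last_facet_shallow_general L f
end

section
/- Let f : X → ℝ be a filter on a Lefschetz complex, let y be a death-giving cell with f(y) = b and a the preceding value of f, and let Y_a be the set of birth-giving cells in X_a that are unpaired by the persistence pairing restricted to X_a. Then there is exactly one subset A ⊆ Y_a such that the sum of canonical cycles d' = Σ_{x∈A} d_x satisfies [d'] = [∂y] in the ℤ/2 homology of X_a. -/
attribute [local instance] Classical.propDecidable

variable {C : Type} [Fintype C] [DecidableEq C]

/-!
Process the cells in filter order and keep two facts about the processed sublevel set `S` and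
the set `Y` of unpaired birth-giving cells: the classes of the canonical cycles `d_x`, `x ∈ Y`,
form a basis of the mod-2 homology of `S`, and every boundary in `S` is already the boundary of
a chain on death-giving cells (which is what makes canonical chains exist). A birth-giving cell
`y` adds the new basis vector `[d_y]` and no new boundary. A death-giving cell `y` adds the
boundary `∂y`, and since `[∂y] = Σ_{x ∈ A} [d_x]` with `A ≠ ∅`, removing any `s ∈ A` from `Y`
leaves a basis. The theorem is the basis property applied to the cycle `∂y`.
-/

open Finset
open scoped symmDiff

lemma ZMod.eq_zero_or_eq_one (a : ZMod 2) : a = 0 ∨ a = 1 := by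
  decide +revert

lemma ZModModule.mem_sup_span_singleton_iff {M : Type*} [AddCommGroup M] [Module (ZMod 2) M]
    {p : Submodule (ZMod 2) M} {u x : M} : x ∈ p ⊔ (ZMod 2) ∙ u ↔ x ∈ p ∨ x + u ∈ p := by
  constructor
  · intro hx
    obtain ⟨w, hw, z, hz, rfl⟩ := Submodule.mem_sup.1 hx
    obtain ⟨a, rfl⟩ := Submodule.mem_span_singleton.1 hz
    rcases ZMod.eq_zero_or_eq_one a with rfl | rfl
    · left; simpa using hw
    · right; simpa [add_assoc, ZModModule.add_self] using hw
  · rintro (hx | hx)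
    · exact Submodule.mem_sup_left hx
    · refine Submodule.mem_sup.2 ⟨_, hx, u, Submodule.mem_span_singleton_self u, ?_⟩
      rw [add_assoc, ZModModule.add_self, add_zero]

lemma ZModModule.sum_symmDiff {ι M : Type*} [DecidableEq ι] [AddCommGroup M] [Module (ZMod 2) M]
    (A B : Finset ι) (g : ι → M) : ∑ i ∈ A ∆ B, g i = ∑ i ∈ A, g i + ∑ i ∈ B, g i := by
  rw [symmDiff_eq_sup_sdiff_inf, sup_eq_union, inf_eq_inter, ← sum_union_inter,
    ← sum_sdiff (inter_subset_union (s := A) (t := B)), add_assoc, ZModModule.add_self, add_zero]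

section Chains

variable {α : Type*} {S T : Finset α}

def chainsOn (S : Finset α) : Submodule (ZMod 2) (α → ZMod 2) where
  carrier := {c | ∀ z ∉ S, c z = 0}
  zero_mem' _ _ := rfl
  add_mem' ha hb z hz := by simp [ha z hz, hb z hz]
  smul_mem' a c hc z hz := by simp [hc z hz]

lemma mem_chainsOn {c : α → ZMod 2} : c ∈ chainsOn S ↔ ∀ z, c z ≠ 0 → z ∈ S :=
  forall_congr' fun _ => not_imp_comm

lemma chainsOn_mono (h : S ⊆ T) : chainsOn S ≤ chainsOn T :=
  fun _ hc z hz => hc z fun hzS => hz (h hzS)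

lemma single_mem_chainsOn [DecidableEq α] {y : α} (hy : y ∈ S) : Pi.single y 1 ∈ chainsOn S :=
  fun _ hz => Pi.single_eq_of_ne (ne_of_mem_of_not_mem hy hz).symm 1

lemma chainsOn_insert [DecidableEq α] (y : α) :
    chainsOn (insert y S) = chainsOn S ⊔ (ZMod 2) ∙ Pi.single y 1 := by
  refine le_antisymm (fun c hc => ?_) (sup_le (chainsOn_mono (subset_insert y S))
    ((Submodule.span_singleton_le_iff_mem _ _).2 (single_mem_chainsOn (mem_insert_self y S))))
  refine Submodule.mem_sup.2 ⟨c - c y • Pi.single y 1, fun z hz => ?_, c y • Pi.single y 1,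
    Submodule.mem_span_singleton.2 ⟨c y, rfl⟩, sub_add_cancel _ _⟩
  by_cases hzy : z = y
  · simp [hzy]
  · simp [hzy, hc z (by simp [hzy, hz])]

end Chains

noncomputable def boundariesOn (L : LC C) (S : Finset C) : Submodule (ZMod 2) (C → ZMod 2) :=
  (chainsOn S).map (bdOp L)

section Boundaries

variable (L : LC C) {S T : Finset C}

lemma boundariesOn_mono (h : S ⊆ T) : boundariesOn L S ≤ boundariesOn L T :=
  Submodule.map_mono (chainsOn_mono h)

lemma bdOp_single (y : C) : bdOp L (Pi.single y 1) = col L y := by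
  funext x
  simp [bdOp, col, Pi.single_apply]

lemma bdOp_col (y : C) : bdOp L (col L y) = 0 :=
  funext fun x => L.bd_sq x y

lemma boundariesOn_insert (y : C) :
    boundariesOn L (insert y S) = boundariesOn L S ⊔ (ZMod 2) ∙ col L y := by
  rw [boundariesOn, chainsOn_insert, Submodule.map_sup, Submodule.map_span, Set.image_singleton,
    bdOp_single]
  rfl

lemma mem_chainsOn_of_mem_insert {y : C} {v : C → ZMod 2} (hcol : col L y ∉ boundariesOn L S)
    (hv : v ∈ chainsOn (insert y S)) (hv0 : bdOp L v = 0) : v ∈ chainsOn S := by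
  rw [chainsOn_insert] at hv
  obtain ⟨w, hw, z, hz, rfl⟩ := Submodule.mem_sup.1 hv
  obtain ⟨a, rfl⟩ := Submodule.mem_span_singleton.1 hz
  rcases ZMod.eq_zero_or_eq_one a with rfl | rfl
  · simpa using hw
  · refine absurd ⟨w, hw, ?_⟩ hcol
    rw [map_add, map_smul, bdOp_single, one_smul] at hv0
    exact (add_eq_zero_iff_eq_neg.1 hv0).trans (ZModModule.neg_eq_self _)

end Boundaries

noncomputable def cellsBelow (L : LC C) (f : C → ℝ) (b : ℝ) : Finset C :=
  L.cells.filter (f · < b)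

section Sublevel

variable {L : LC C} {f : C → ℝ} {b : ℝ} {y : C}

lemma mem_cellsBelow {z : C} : z ∈ cellsBelow L f b ↔ z ∈ L.cells ∧ f z < b := mem_filter

lemma notMem_cellsBelow_self : y ∉ cellsBelow L f (f y) :=
  fun h => lt_irrefl _ (mem_cellsBelow.1 h).2

lemma col_mem_chainsOn (hf : IsFilter L f) (y : C) : col L y ∈ chainsOn (cellsBelow L f (f y)) :=
  mem_chainsOn.2 fun z hz => mem_cellsBelow.2 ⟨(L.bd_mem z y hz).1, hf.2 z y hz⟩

lemma boundariesOn_cellsBelow_le (hf : IsFilter L f) (b : ℝ) :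
    boundariesOn L (cellsBelow L f b) ≤ chainsOn (cellsBelow L f b) := by
  rintro _ ⟨c, hc, rfl⟩
  refine mem_chainsOn.2 fun z hz => ?_
  obtain ⟨u, -, hu⟩ := exists_ne_zero_of_sum_ne_zero hz
  obtain ⟨hzu, hcu⟩ := mul_ne_zero_iff.1 hu
  exact mem_cellsBelow.2 ⟨(L.bd_mem z u hzu).1,
    (hf.2 z u hzu).trans (mem_cellsBelow.1 (mem_chainsOn.1 hc u hcu)).2⟩

lemma isBdryBelow_iff {v : C → ZMod 2} :
    IsBdryBelow L f b v ↔ v ∈ boundariesOn L (cellsBelow L f b) := by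
  simp only [IsBdryBelow, boundariesOn, Submodule.mem_map, mem_chainsOn, mem_cellsBelow]

lemma homBelow_iff {v w : C → ZMod 2} :
    HomBelow L f b v w ↔ v + w ∈ boundariesOn L (cellsBelow L f b) :=
  isBdryBelow_iff

end Sublevel

-- Exactly the condition under which `canChain L f x` is not its junk value `0`.
def HasCanonicalChain (L : LC C) (f : C → ℝ) (x : C) : Prop :=
  ∃ c : C → ZMod 2, (∀ z, c z ≠ 0 → f z < f x ∧ givesDeath L f z) ∧ bdOp L c = col L x

section CanonicalCycles

variable {L : LC C} {f : C → ℝ} {x z : C}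

lemma hasCanonicalChain_of_mem_boundariesOn
    (h : col L x ∈ boundariesOn L ((cellsBelow L f (f x)).filter (givesDeath L f))) :
    HasCanonicalChain L f x := by
  obtain ⟨c, hc, hbc⟩ := h
  refine ⟨c, fun z hz => ?_, hbc⟩
  obtain ⟨hz, hzd⟩ := mem_filter.1 (mem_chainsOn.1 hc z hz)
  exact ⟨(mem_cellsBelow.1 hz).2, hzd⟩

namespace HasCanonicalChain

lemma canChain_spec (h : HasCanonicalChain L f x) :
    (∀ z, canChain L f x z ≠ 0 → f z < f x ∧ givesDeath L f z) ∧
      bdOp L (canChain L f x) = col L x := by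
  unfold HasCanonicalChain at h
  rw [canChain, dif_pos h]
  exact h.choose_spec

lemma canChain_apply_eq_zero (h : HasCanonicalChain L f x) (hz : ¬ f z < f x) :
    canChain L f x z = 0 :=
  by_contra fun hz' => hz (h.canChain_spec.1 z hz').1

lemma canChain_mem_chainsOn (h : HasCanonicalChain L f x) :
    canChain L f x ∈ chainsOn (cellsBelow L f (f x)) :=
  mem_chainsOn.2 fun z hz =>
    have ⟨hlt, hd⟩ := h.canChain_spec.1 z hz
    mem_cellsBelow.2 ⟨hd.1, hlt⟩

lemma canCycle_self (h : HasCanonicalChain L f x) : canCycle L f x x = 1 := by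
  simp [canCycle, h.canChain_apply_eq_zero (lt_irrefl _)]

lemma canCycle_apply_of_lt (h : HasCanonicalChain L f x) (hz : f x < f z) :
    canCycle L f x z = 0 := by
  simp [canCycle, ne_of_apply_ne f hz.ne', h.canChain_apply_eq_zero hz.le.not_gt]

end HasCanonicalChain

end CanonicalCycles

structure PairingInvariant (L : LC C) (f : C → ℝ) (S Y : Finset C) : Prop where
  subset : Y ⊆ S
  hasCanonicalChain : ∀ x ∈ Y, HasCanonicalChain L f x
  boundariesOn_le : boundariesOn L S ≤ boundariesOn L (S.filter (givesDeath L f))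
  eq_empty_of_sum_mem : ∀ B ⊆ Y, ∑ x ∈ B, canCycle L f x ∈ boundariesOn L S → B = ∅
  exists_sum_add_mem : ∀ v ∈ chainsOn S, bdOp L v = 0 →
    ∃ A ⊆ Y, ∑ x ∈ A, canCycle L f x + v ∈ boundariesOn L S

namespace PairingInvariant

variable {L : LC C} {f : C → ℝ} {S Y A : Finset C} {y s : C}

lemma empty : PairingInvariant L f ∅ ∅ where
  subset := subset_refl _
  hasCanonicalChain := by simp
  boundariesOn_le := by simp
  eq_empty_of_sum_mem _ hB _ := subset_empty.1 hB
  exists_sum_add_mem v hv _ := by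
    refine ⟨∅, subset_refl _, ?_⟩
    rw [sum_empty, zero_add, show v = 0 from funext fun z => hv z (notMem_empty z)]
    exact zero_mem _

lemma existsUnique (h : PairingInvariant L f S Y) {v : C → ZMod 2} (hv : v ∈ chainsOn S)
    (hv0 : bdOp L v = 0) :
    ∃! A, A ⊆ Y ∧ ∑ x ∈ A, canCycle L f x + v ∈ boundariesOn L S := by
  obtain ⟨A, hAY, hA⟩ := h.exists_sum_add_mem v hv hv0
  refine ⟨A, ⟨hAY, hA⟩, fun B ⟨hBY, hB⟩ => symmDiff_eq_bot.1 ?_⟩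
  refine h.eq_empty_of_sum_mem _ (fun x hx => ?_) ?_
  · exact (union_subset hBY hAY) (symmDiff_subset_union hx)
  · rw [ZModModule.sum_symmDiff]
    convert add_mem hB hA using 1
    rw [add_add_add_comm, ZModModule.add_self, add_zero]

lemma sum_canCycle_apply_of_mem (h : PairingInvariant L f (cellsBelow L f (f y)) Y)
    (hyc : HasCanonicalChain L f y) {B : Finset C} (hB : B ⊆ insert y Y) (hyB : y ∈ B) :
    (∑ x ∈ B, canCycle L f x) y = 1 := by
  rw [Finset.sum_apply]
  refine (sum_eq_single_of_mem (f := fun x => canCycle L f x y) y hyB fun x hx hxy => ?_).trans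
    hyc.canCycle_self
  have hxY : x ∈ Y := (mem_insert.1 (hB hx)).resolve_left hxy
  exact (h.hasCanonicalChain x hxY).canCycle_apply_of_lt (mem_cellsBelow.1 (h.subset hxY)).2

lemma insert_birth (hf : IsFilter L f) (hy : givesBirth L f y)
    (h : PairingInvariant L f (cellsBelow L f (f y)) Y) :
    PairingInvariant L f (insert y (cellsBelow L f (f y))) (insert y Y) := by
  set S := cellsBelow L f (f y)
  have hyS : y ∉ S := notMem_cellsBelow_self
  have hcol : col L y ∈ boundariesOn L S := isBdryBelow_iff.1 hy.2
  have hbd : boundariesOn L (insert y S) = boundariesOn L S := by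
    rw [boundariesOn_insert, sup_eq_left, Submodule.span_singleton_le_iff_mem]
    exact hcol
  have hyc : HasCanonicalChain L f y :=
    hasCanonicalChain_of_mem_boundariesOn (h.boundariesOn_le hcol)
  refine ⟨insert_subset_insert y h.subset, (forall_mem_insert _ _ _).2 ⟨hyc, h.hasCanonicalChain⟩,
    ?_, fun B hB hsum => ?_, fun v hv hv0 => ?_⟩
  · rw [hbd]
    exact h.boundariesOn_le.trans (boundariesOn_mono L (filter_subset_filter _ (subset_insert y S)))
  · rw [hbd] at hsum
    have hyB : y ∉ B := fun hyB => one_ne_zero <|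
      (h.sum_canCycle_apply_of_mem hyc hB hyB).symm.trans
        (boundariesOn_cellsBelow_le hf _ hsum y hyS)
    exact h.eq_empty_of_sum_mem B ((subset_insert_iff_of_notMem hyB).1 hB) hsum
  · rw [hbd]
    rw [chainsOn_insert] at hv
    obtain ⟨w, hw, z, hz, rfl⟩ := Submodule.mem_sup.1 hv
    obtain ⟨a, rfl⟩ := Submodule.mem_span_singleton.1 hz
    rcases ZMod.eq_zero_or_eq_one a with rfl | rfl
    · rw [zero_smul, add_zero] at hv0 ⊢
      obtain ⟨A, hAY, hA⟩ := h.exists_sum_add_mem w hw hv0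
      exact ⟨A, hAY.trans (subset_insert y Y), hA⟩
    · rw [one_smul] at hv0 ⊢
      -- `v + d_y = w + c_y` no longer involves `y`
      have hw' : bdOp L (w + canChain L f y) = 0 := by
        rw [map_add, hyc.canChain_spec.2, ← bdOp_single, ← map_add, hv0]
      obtain ⟨A, hAY, hA⟩ :=
        h.exists_sum_add_mem _ (add_mem hw hyc.canChain_mem_chainsOn) hw'
      refine ⟨insert y A, insert_subset_insert y hAY, ?_⟩
      rw [sum_insert fun hyA => hyS (h.subset (hAY hyA))]
      convert hA using 1
      rw [canCycle]
      linear_combination ZModModule.add_self (Pi.single y 1 : C → ZMod 2)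

lemma insert_death (hf : IsFilter L f) (hy : givesDeath L f y)
    (h : PairingInvariant L f (cellsBelow L f (f y)) Y) (hAY : A ⊆ Y)
    (hA : ∑ x ∈ A, canCycle L f x + col L y ∈ boundariesOn L (cellsBelow L f (f y)))
    (hs : s ∈ A) :
    PairingInvariant L f (insert y (cellsBelow L f (f y))) (Y.erase s) := by
  set S := cellsBelow L f (f y)
  have hcol : col L y ∉ boundariesOn L S := fun h' => hy.2 (isBdryBelow_iff.2 h')
  have hmem {u : C → ZMod 2} : u ∈ boundariesOn L (insert y S) ↔
      u ∈ boundariesOn L S ∨ u + col L y ∈ boundariesOn L S := by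
    rw [boundariesOn_insert]
    exact ZModModule.mem_sup_span_singleton_iff
  refine ⟨(erase_subset s Y).trans (h.subset.trans (subset_insert y S)),
    fun x hx => h.hasCanonicalChain x (mem_of_mem_erase hx), ?_, fun B hB hsum => ?_,
    fun v hv hv0 => ?_⟩
  · rw [filter_insert, if_pos hy, boundariesOn_insert, boundariesOn_insert]
    exact sup_le_sup_right h.boundariesOn_le _
  · rcases hmem.1 hsum with hsum | hsum
    · exact h.eq_empty_of_sum_mem B (hB.trans (erase_subset s Y)) hsum
    · have hBA : B = A := (h.existsUnique (col_mem_chainsOn hf y) (bdOp_col L y)).unique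
        ⟨hB.trans (erase_subset s Y), hsum⟩ ⟨hAY, hA⟩
      exact absurd (hB (hBA ▸ hs)) (notMem_erase s Y)
  · obtain ⟨A₁, hA₁Y, hA₁⟩ :=
      h.exists_sum_add_mem v (mem_chainsOn_of_mem_insert L hcol hv hv0) hv0
    by_cases hsA₁ : s ∈ A₁
    · refine ⟨A₁ ∆ A, fun x hx => mem_erase.2 ⟨?_, ?_⟩, hmem.2 (Or.inr ?_)⟩
      · rintro rfl
        simp [mem_symmDiff, hsA₁, hs] at hx
      · exact (union_subset hA₁Y hAY) (symmDiff_subset_union hx)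
      · rw [ZModModule.sum_symmDiff]
        convert add_mem hA₁ hA using 1
        abel
    · exact ⟨A₁, subset_erase.2 ⟨hA₁Y, hsA₁⟩,
        boundariesOn_mono L (subset_insert y S) hA₁⟩

end PairingInvariant

section Algorithm

variable {L : LC C} {f : C → ℝ} {y : C}

lemma sortAux_spec {α : Type} [DecidableEq α] (f : α → ℝ) (n : ℕ) (S : Finset α)
    (hS : S.card ≤ n) :
    (∀ x, x ∈ sortAux f n S ↔ x ∈ S) ∧
      (sortAux f n S).Pairwise (fun a b => f a ≤ f b ∧ a ≠ b) := by
  induction n generalizing S with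
  | zero => simp [sortAux, card_eq_zero.1 (Nat.le_zero.1 hS)]
  | succ n ih =>
    by_cases hne : S.Nonempty
    · rw [sortAux, dif_pos hne]
      obtain ⟨hmS, hmin⟩ := (exists_min_image S f hne).choose_spec
      set m := (exists_min_image S f hne).choose
      obtain ⟨hmem, hsort⟩ := ih (S.erase m) (by rw [card_erase_of_mem hmS]; omega)
      refine ⟨fun x => ?_, List.Pairwise.cons (fun a ha => ?_) hsort⟩
      · rw [List.mem_cons, hmem, mem_erase]
        by_cases hxm : x = m <;> simp [hxm, hmS]
      · obtain ⟨ham, haS⟩ := mem_erase.1 ((hmem a).1 ha)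
        exact ⟨hmin a haS, Ne.symm ham⟩
    · rw [not_nonempty_iff_eq_empty] at hne
      simp [sortAux, hne]

lemma sortedCells_filter_spec (hf : IsFilter L f) (b : ℝ) :
    ((sortedCells L f).filter (fun x => decide (f x < b))).toFinset = cellsBelow L f b ∧
      ((sortedCells L f).filter (fun x => decide (f x < b))).Pairwise (f · < f ·) := by
  obtain ⟨hmem, hsort⟩ := sortAux_spec f _ L.cells le_rfl
  refine ⟨ext fun x => ?_, (hsort.sublist List.filter_sublist).imp_of_mem ?_⟩
  · simp only [List.mem_toFinset, List.mem_filter, sortedCells, hmem, decide_eq_true_eq,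
      mem_cellsBelow]
  · intro a c ha hc ⟨hle, hne⟩
    have hcells : ∀ {x}, x ∈ (sortedCells L f).filter (fun x => decide (f x < b)) → x ∈ L.cells :=
      fun hx => (hmem _).1 (List.mem_filter.1 hx).1
    exact hle.lt_of_ne fun heq => hne (hf.1 a (hcells ha) c (hcells hc) heq)

lemma toFinset_eq_cellsBelow_of_append {l : List C} {b : ℝ}
    (hsort : (l ++ [y]).Pairwise (f · < f ·)) (hl : (l ++ [y]).toFinset = cellsBelow L f b) :
    l.toFinset = cellsBelow L f (f y) := by
  have hmem : ∀ {z}, z ∈ l ++ [y] ↔ z ∈ L.cells ∧ f z < b := by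
    intro z; rw [← List.mem_toFinset, hl, mem_cellsBelow]
  have hlt : ∀ z ∈ l, f z < f y := fun z hz =>
    (List.pairwise_append.1 hsort).2.2 z hz y (List.mem_singleton_self y)
  have hyb : f y < b := (hmem.1 (by simp)).2
  ext z
  rw [List.mem_toFinset, mem_cellsBelow]
  refine ⟨fun hz => ⟨(hmem.1 (List.mem_append_left _ hz)).1, hlt z hz⟩, fun ⟨hz, hzy⟩ => ?_⟩
  rcases List.mem_append.1 (hmem.2 ⟨hz, hzy.trans hyb⟩) with hz | hz
  · exact hz
  · exact absurd hzy (by simp [List.mem_singleton.1 hz])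

lemma maxCellD_mem {α : Type} (f : α → ℝ) {A : Finset α} (hA : A.Nonempty) (d : α) :
    maxCellD f A d ∈ A := by
  rw [maxCellD, dif_pos hA]
  exact (exists_max_image A f hA).choose_spec.1

lemma pairStep_fst_of_givesBirth (st : Finset C × Finset (C × C)) (hy : givesBirth L f y) :
    (pairStep L f st y).1 = insert y st.1 := by
  rw [pairStep, if_pos hy]

lemma pairStep_fst_of_not_givesBirth (st : Finset C × Finset (C × C)) (hy : ¬ givesBirth L f y)
    (h : ∃! A, A ⊆ st.1 ∧ HomBelow L f (f y) (∑ x ∈ A, canCycle L f x) (col L y)) :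
    (pairStep L f st y).1 = st.1.erase (maxCellD f h.exists.choose y) := by
  simp only [pairStep, if_neg hy, dif_pos h]

lemma PairingInvariant.insert_pairStep (hf : IsFilter L f) (hy : y ∈ L.cells)
    {st : Finset C × Finset (C × C)} (h : PairingInvariant L f (cellsBelow L f (f y)) st.1) :
    PairingInvariant L f (insert y (cellsBelow L f (f y))) (pairStep L f st y).1 := by
  by_cases hb : givesBirth L f y
  · rw [pairStep_fst_of_givesBirth st hb]
    exact h.insert_birth hf hb
  have hd : givesDeath L f y := ⟨hy, fun h' => hb ⟨hy, h'⟩⟩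
  have hex : ∃! A, A ⊆ st.1 ∧ HomBelow L f (f y) (∑ x ∈ A, canCycle L f x) (col L y) := by
    simpa only [homBelow_iff] using h.existsUnique (col_mem_chainsOn hf y) (bdOp_col L y)
  rw [pairStep_fst_of_not_givesBirth st hb hex]
  obtain ⟨hAY, hA⟩ := hex.exists.choose_spec
  rw [homBelow_iff] at hA
  have hne : hex.exists.choose.Nonempty := by
    rw [nonempty_iff_ne_empty]
    intro hempty
    rw [hempty, sum_empty, zero_add] at hA
    exact hd.2 (isBdryBelow_iff.2 hA)
  exact h.insert_death hf hd hAY hA (maxCellD_mem f hne y)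

lemma pairingInvariant_foldl (hf : IsFilter L f) (l : List C) (b : ℝ)
    (hsort : l.Pairwise (f · < f ·)) (hl : l.toFinset = cellsBelow L f b) :
    PairingInvariant L f l.toFinset (l.foldl (pairStep L f) (∅, ∅)).1 := by
  induction l using List.reverseRecOn generalizing b with
  | nil => exact PairingInvariant.empty
  | append_singleton l y ih =>
    have hl' := toFinset_eq_cellsBelow_of_append hsort hl
    have hy : y ∈ L.cells := (mem_cellsBelow.1 (hl ▸ List.mem_toFinset.2 (by simp))).1
    have h := ih (f y) (List.pairwise_append.1 hsort).1 hl'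
    rw [hl'] at h
    rw [List.foldl_append, List.foldl_cons, List.foldl_nil, List.toFinset_append,
      List.toFinset_cons, List.toFinset_nil, insert_empty, union_comm, ← insert_eq, hl']
    exact h.insert_pairStep hf hy

lemma pairingInvariant_unpairedBelow (hf : IsFilter L f) (b : ℝ) :
    PairingInvariant L f (cellsBelow L f b) (unpairedBelow L f b) := by
  obtain ⟨hl, hsort⟩ := sortedCells_filter_spec hf b
  rw [← hl]
  exact pairingInvariant_foldl hf _ b hsort hl

end Algorithm

theorem pairing_subset_exists_unique_general (L : LC C) (f : C → ℝ)
    (hf : IsFilter L f) (y : C) :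
    ∃! A : Finset C, A ⊆ unpairedBelow L f (f y) ∧
      HomBelow L f (f y) (∑ x ∈ A, canCycle L f x) (col L y) := by
  simp only [homBelow_iff]
  exact (pairingInvariant_unpairedBelow hf (f y)).existsUnique (col_mem_chainsOn hf y)
    (bdOp_col L y)

/-- For a death-giving cell `y`, with `Y_a` the set of
birth-giving cells below `y` that are unpaired by the persistence pairing
restricted to the sublevel set below `y`, there is exactly one subset
`A ⊆ Y_a` such that `Σ_{x∈A} d_x` is homologous to `∂y` in the sublevel set
strictly below `y`. -/
theorem pairing_subset_exists_unique (L : LC C) (f : C → ℝ)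
    (hf : IsFilter L f) (y : C) (hy : givesDeath L f y) :
    ∃! A : Finset C, A ⊆ unpairedBelow L f (f y) ∧
      HomBelow L f (f y) (∑ x ∈ A, canCycle L f x) (col L y) :=
  pairing_subset_exists_unique_general L f hf y
end
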